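/- arXiv:2008.03255 — 5 statements merged into one kernel-verified Lean document; each statement's English description precedes it below -/
import Mathlib

section
/- For the probability measure P on ℝ with P({j}) = 1/2^j for j ∈ {1,2,3,4,5} and P({6}) = 1/2^5, the third quantization error equals 65/384, attained at the set {1, 7/3, 19/4}. -/
/-- Mass function: f(j) = 1/2^j for j = 1,…,5 and f(6) = 1/2^5. -/
noncomputable def massA (j : ℕ) : ℝ := if j = 6 then 1/2^5 else 1/2^j

/-- Distortion error of a nonempty finite set α for the measure with mass `massA`. -/
noncomputable def errA (α : Finset ℝ) (h : α.Nonempty) : ℝ :=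
  ∑ j ∈ Finset.Icc 1 6, massA j * α.inf' h (fun a => ((j : ℝ) - a)^2)

/-!
Send every atom to a nearest point of `α`. The atoms sharing a point `a` contribute at least their
weighted variance about their own mean, whatever `a` is, so `V(P; α)` is at least the total
within-cluster variance of some assignment of the six atoms to three clusters. A finite check over
all `3 ^ 6` assignments bounds this below by `65/384`, the value of the clusters `{1}`, `{2, 3}`,
`{4, 5, 6}`, whose means are the points `1`, `7/3`, `19/4`.
-/

open Finset

section ClusterVar

variable {ι K L : Type*}

def clusterVar [Field K] (w x : ι → K) (B : Finset ι) : K :=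
  ∑ k ∈ B, w k * x k ^ 2 - (∑ k ∈ B, w k * x k) ^ 2 / ∑ k ∈ B, w k

lemma RingHom.map_clusterVar [Field K] [Field L] (f : K →+* L) (w x : ι → K) (B : Finset ι) :
    f (clusterVar w x B) = clusterVar (f ∘ w) (f ∘ x) B := by
  simp [clusterVar, map_div₀]

lemma clusterVar_le_sum_mul_sq_sub [Field K] [LinearOrder K] [IsStrictOrderedRing K]
    {w : ι → K} {B : Finset ι} (hw : ∀ k ∈ B, 0 ≤ w k) (x : ι → K) (a : K) :
    clusterVar w x B ≤ ∑ k ∈ B, w k * (x k - a) ^ 2 := by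
  have expand : ∑ k ∈ B, w k * (x k - a) ^ 2 =
      ∑ k ∈ B, w k * x k ^ 2 - 2 * a * ∑ k ∈ B, w k * x k + a ^ 2 * ∑ k ∈ B, w k := by
    simp only [mul_sum, ← sum_sub_distrib, ← sum_add_distrib]
    exact sum_congr rfl fun k _ => by ring
  rw [clusterVar, expand]
  rcases (sum_nonneg hw).eq_or_lt with hW | hW
  · have hM : ∑ k ∈ B, w k * x k = 0 :=
      sum_eq_zero fun k hk => by rw [(sum_eq_zero_iff_of_nonneg hw).1 hW.symm k hk, zero_mul]
    simp [← hW, hM]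
  · have hsq : 0 ≤ (a * ∑ k ∈ B, w k - ∑ k ∈ B, w k * x k) ^ 2 / ∑ k ∈ B, w k := by positivity
    have key : (a * ∑ k ∈ B, w k - ∑ k ∈ B, w k * x k) ^ 2 / ∑ k ∈ B, w k =
        (∑ k ∈ B, w k * x k) ^ 2 / ∑ k ∈ B, w k - 2 * a * ∑ k ∈ B, w k * x k
          + a ^ 2 * ∑ k ∈ B, w k := by
      field_simp
      ring
    linarith

end ClusterVar

lemma Finset.exists_subset_range_fin {β : Type*} {s : Finset β} (hs : s.Nonempty) {n : ℕ}
    (hn : s.card ≤ n) : ∃ c : Fin n → β, ↑s ⊆ Set.range c := by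
  classical
  obtain ⟨b₀, -⟩ := hs
  refine ⟨fun i => if h : (i : ℕ) < s.card then s.equivFin.symm ⟨i, h⟩ else b₀, fun b hb => ?_⟩
  refine ⟨Fin.castLE hn (s.equivFin ⟨b, hb⟩), ?_⟩
  simp

lemma exists_sum_clusterVar_le_sum_inf' {ι K : Type*} [Fintype ι] [Field K] [LinearOrder K]
    [IsStrictOrderedRing K] {w : ι → K} (hw : ∀ k, 0 ≤ w k) (x : ι → K) {α : Finset K} (h : α.Nonempty) {n : ℕ} (hn : α.card ≤ n) :
    ∃ g : ι → Fin n, ∑ i, clusterVar w x {k | g k = i} ≤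
      ∑ k, w k * α.inf' h (fun a => (x k - a) ^ 2) := by
  obtain ⟨c, hc⟩ := exists_subset_range_fin h hn
  have nearest : ∀ k, ∃ i, α.inf' h (fun a => (x k - a) ^ 2) = (x k - c i) ^ 2 := fun k => by
    obtain ⟨a, ha, hmin⟩ := exists_mem_eq_inf' h (fun a => (x k - a) ^ 2)
    obtain ⟨i, rfl⟩ := hc ha
    exact ⟨i, hmin⟩
  choose g hg using nearest
  refine ⟨g, ?_⟩
  calc ∑ i, clusterVar w x {k | g k = i}
      ≤ ∑ i, ∑ k with g k = i, w k * (x k - c i) ^ 2 :=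
        sum_le_sum fun i _ => clusterVar_le_sum_mul_sq_sub (fun k _ => hw k) x (c i)
    _ = ∑ i, ∑ k with g k = i, w k * (x k - c (g k)) ^ 2 :=
        sum_congr rfl fun i _ => sum_congr rfl fun k hk => by rw [(mem_filter.1 hk).2]
    _ = ∑ k, w k * (x k - c (g k)) ^ 2 := sum_fiberwise univ g _
    _ = _ := by simp only [hg]

def massQ : Fin 6 → ℚ := ![1/2, 1/4, 1/8, 1/16, 1/32, 1/32]

-- The elaborator's `decide` gets stuck on `Rat` arithmetic; the kernel evaluates it.
theorem le_sum_clusterVar_massQ (g : Fin 6 → Fin 3) :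
    65 / 384 ≤ ∑ i, clusterVar massQ (fun k => (k : ℚ) + 1) {k | g k = i} := by
  revert g
  decide +kernel

lemma errA_eq_sum_massQ (α : Finset ℝ) (h : α.Nonempty) :
    errA α h = ∑ k : Fin 6, (massQ k : ℝ) * α.inf' h (fun a => ((k : ℝ) + 1 - a) ^ 2) := by
  simp [errA, Fin.sum_univ_six, sum_Icc_succ_top, massA, massQ]
  norm_num

lemma le_errA_of_card_le_three (α : Finset ℝ) (h : α.Nonempty) (hα : α.card ≤ 3) :
    65 / 384 ≤ errA α h := by
  obtain ⟨g, hg⟩ := exists_sum_clusterVar_le_sum_inf' (w := fun k => (massQ k : ℝ))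
    (fun k => by fin_cases k <;> norm_num [massQ]) (fun k => (k : ℝ) + 1) h hα
  have hQ := (Rat.cast_le (K := ℝ)).2 (le_sum_clusterVar_massQ g)
  simp only [Rat.cast_sum, ← Rat.coe_castHom, RingHom.map_clusterVar] at hQ
  rw [errA_eq_sum_massQ]
  refine le_trans ?_ hg
  simpa [Function.comp_def] using hQ

lemma errA_optimal : errA {1, 7/3, 19/4} (by simp) = 65/384 := by
  simp [errA, sum_Icc_succ_top, massA]
  norm_num [min_def]

theorem stmt1 :
    sInf {v : ℝ | ∃ (α : Finset ℝ) (h : α.Nonempty), α.card ≤ 3 ∧ v = errA α h}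
      = 65/384 ∧
    errA {1, 7/3, 19/4} (by simp) = 65/384 := by
  refine ⟨IsLeast.csInf_eq ⟨⟨{1, 7/3, 19/4}, by simp, card_le_three, errA_optimal.symm⟩, ?_⟩,
    errA_optimal⟩
  rintro _ ⟨α, h, hα, rfl⟩
  exact le_errA_of_card_le_three α h hα
end

section
/- Let P be the probability measure on ℝ supported on {1,…,6} with f(j) = (3/10)^{j−1}·(7/10) for j = 1,…,5 and f(6) = (3/10)^5. Then the second quantization error equals 174296997/1000000000, and it is attained at the set {1, a}, where a = E(X | X ∈ {2,3,4,5,6}). -/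
/-- Mass function: f(j) = (3/10)^(j-1)·(7/10) for j = 1,…,5 and f(6) = (3/10)^5. -/
noncomputable def massB (j : ℕ) : ℝ := if j = 6 then (3/10)^5 else (3/10)^(j-1) * (7/10)

/-- Distortion error of a nonempty finite set α for the measure with mass `massB`. -/
noncomputable def errB (α : Finset ℝ) (h : α.Nonempty) : ℝ :=
  ∑ j ∈ Finset.Icc 1 6, massB j * α.inf' h (fun a => ((j : ℝ) - a)^2)

/-- Conditional expectation E(X | X ∈ {k,…,l}). -/
noncomputable def avB (k l : ℕ) : ℝ :=
  (∑ j ∈ Finset.Icc k l, (j : ℝ) * massB j) / (∑ j ∈ Finset.Icc k l, massB j)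

/-!
Two centres `b ≤ c` split `{1, …, 6}` at their midpoint into a prefix `{1, …, k}` and a suffix
`{k + 1, …, 6}`. On each part the error is at least the weighted variance of that part about its
own centroid, so the error is at least the smallest sum of the two within-cluster variances over
the seven splits. That minimum is attained at the split `{1} ∪ {2, …, 6}`, whose centroids are
`1` and `E(X | X ∈ {2, …, 6})`.
-/

open Finset

noncomputable def clusterCost {ι : Type*} (s : Finset ι) (w x : ι → ℝ) : ℝ :=
  ∑ i ∈ s, w i * (x i - s.centerMass w x) ^ 2

section
variable {ι : Type*} {s : Finset ι} {w : ι → ℝ} (x : ι → ℝ)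

lemma sum_mul_eq_sum_mul_centerMass (hw : ∀ i ∈ s, 0 ≤ w i) :
    ∑ i ∈ s, w i * x i = (∑ i ∈ s, w i) * s.centerMass w x := by
  by_cases hW : ∑ i ∈ s, w i = 0
  · rw [hW, zero_mul]
    exact sum_eq_zero fun i hi => by rw [(sum_eq_zero_iff_of_nonneg hw).1 hW i hi, zero_mul]
  · simp only [centerMass, smul_eq_mul]
    field_simp

lemma sum_mul_sq_sub_eq (hw : ∀ i ∈ s, 0 ≤ w i) (a : ℝ) :
    ∑ i ∈ s, w i * (x i - a) ^ 2
      = clusterCost s w x + (∑ i ∈ s, w i) * (s.centerMass w x - a) ^ 2 := by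
  set m := s.centerMass w x
  calc ∑ i ∈ s, w i * (x i - a) ^ 2
      = ∑ i ∈ s, (w i * (x i - m) ^ 2 + (m - a) * (2 * (w i * x i) - (a + m) * w i)) :=
        sum_congr rfl fun i _ => by ring
    _ = clusterCost s w x + (m - a) * (2 * ∑ i ∈ s, w i * x i - (a + m) * ∑ i ∈ s, w i) := by
        rw [sum_add_distrib, ← mul_sum, sum_sub_distrib, ← mul_sum, ← mul_sum]; rfl
    _ = _ := by rw [sum_mul_eq_sum_mul_centerMass x hw]; ring

lemma clusterCost_le (hw : ∀ i ∈ s, 0 ≤ w i) (a : ℝ) :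
    clusterCost s w x ≤ ∑ i ∈ s, w i * (x i - a) ^ 2 := by
  rw [sum_mul_sq_sub_eq x hw a]
  exact le_add_of_nonneg_right (mul_nonneg (sum_nonneg hw) (sq_nonneg _))

lemma clusterCost_add_clusterCost_le_sum_min (hw : ∀ i ∈ s, 0 ≤ w i) {b c : ℝ} (hbc : b ≤ c) :
    clusterCost {i ∈ s | x i ≤ (b + c) / 2} w x + clusterCost {i ∈ s | ¬ x i ≤ (b + c) / 2} w x
      ≤ ∑ i ∈ s, w i * min ((x i - b) ^ 2) ((x i - c) ^ 2) := by
  rw [← sum_filter_add_sum_filter_not s (fun i => x i ≤ (b + c) / 2)]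
  refine add_le_add ((clusterCost_le x (fun i hi => hw i (mem_filter.1 hi).1) b).trans ?_)
    ((clusterCost_le x (fun i hi => hw i (mem_filter.1 hi).1) c).trans ?_) <;>
    refine sum_le_sum fun i hi => ?_ <;> rw [mem_filter] at hi
  · rw [min_eq_left (by nlinarith [hi.2])]
  · rw [min_eq_right (by nlinarith [hi.2])]

end

lemma massB_nonneg (j : ℕ) : 0 ≤ massB j := by
  unfold massB; split_ifs <;> positivity

lemma filter_Icc_cast_le (n : ℕ) (t : ℝ) :
    (Icc 1 n).filter (fun j : ℕ => (j : ℝ) ≤ t) = Icc 1 (min ⌊t⌋₊ n) := by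
  ext j
  simp only [mem_filter, mem_Icc]
  constructor
  · rintro ⟨⟨h1, hn⟩, ht⟩
    have := (Nat.le_floor_iff' (by omega)).2 ht
    omega
  · rintro ⟨h1, hj⟩
    exact ⟨⟨h1, by omega⟩, (Nat.le_floor_iff' (by omega)).1 (by omega)⟩

lemma filter_Icc_not_cast_le (n : ℕ) (t : ℝ) :
    (Icc 1 n).filter (fun j : ℕ => ¬ (j : ℝ) ≤ t) = Icc (min ⌊t⌋₊ n + 1) n := by
  ext j
  simp only [mem_filter, mem_Icc]
  constructor
  · rintro ⟨⟨h1, hn⟩, ht⟩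
    have := mt (Nat.le_floor_iff' (by omega)).1 ht
    omega
  · rintro ⟨hj, hn⟩
    refine ⟨⟨by omega, hn⟩, fun ht => ?_⟩
    have := (Nat.le_floor_iff' (by omega)).2 ht
    omega

lemma le_clusterCost_Icc_add_clusterCost_Icc {k : ℕ} (hk : k ≤ 6) :
    (174296997/1000000000 : ℝ) ≤
      clusterCost (Icc 1 k) massB (fun j => j) + clusterCost (Icc (k + 1) 6) massB (fun j => j) := by
  interval_cases k <;> norm_num [clusterCost, centerMass, massB, sum_Icc_succ_top]

lemma errB_pair (b c : ℝ) (h : ({b, c} : Finset ℝ).Nonempty) :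
    errB {b, c} h = ∑ j ∈ Icc 1 6, massB j * min (((j : ℝ) - b) ^ 2) (((j : ℝ) - c) ^ 2) := by
  refine sum_congr rfl fun j _ => ?_
  rw [inf'_insert (singleton_nonempty c), inf'_singleton]

lemma le_errB_pair (b c : ℝ) (h : ({b, c} : Finset ℝ).Nonempty) :
    (174296997/1000000000 : ℝ) ≤ errB {b, c} h := by
  rw [errB_pair]
  clear h
  wlog hbc : b ≤ c generalizing b c
  · simpa only [min_comm] using this c b (le_of_not_ge hbc)
  calc (174296997/1000000000 : ℝ)
      ≤ clusterCost (Icc 1 (min ⌊(b + c) / 2⌋₊ 6)) massB (fun j => j)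
        + clusterCost (Icc (min ⌊(b + c) / 2⌋₊ 6 + 1) 6) massB (fun j => j) :=
        le_clusterCost_Icc_add_clusterCost_Icc (min_le_right _ _)
    _ ≤ _ := by
        rw [← filter_Icc_cast_le, ← filter_Icc_not_cast_le]
        exact clusterCost_add_clusterCost_le_sum_min _ (fun j _ => massB_nonneg j) hbc

lemma errB_one_avB : errB {1, avB 2 6} (by simp) = 174296997/1000000000 := by
  rw [errB_pair]
  norm_num [avB, massB, sum_Icc_succ_top, min_def]

lemma Finset.exists_eq_pair_of_card_le_two {α : Type*} [DecidableEq α] {s : Finset α}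
    (hs : s.Nonempty) (hcard : s.card ≤ 2) : ∃ b c, s = {b, c} := by
  interval_cases h : s.card
  · exact absurd (card_eq_zero.1 h) hs.ne_empty
  · obtain ⟨b, rfl⟩ := card_eq_one.1 h
    exact ⟨b, b, by simp⟩
  · obtain ⟨b, c, -, rfl⟩ := card_eq_two.1 h
    exact ⟨b, c, rfl⟩

theorem stmt4 :
    sInf {v : ℝ | ∃ (α : Finset ℝ) (h : α.Nonempty), α.card ≤ 2 ∧ v = errB α h}
      = 174296997/1000000000 ∧
    errB {1, avB 2 6} (by simp) = 174296997/1000000000 := by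
  refine ⟨IsLeast.csInf_eq ⟨?_, ?_⟩, errB_one_avB⟩
  · exact ⟨{1, avB 2 6}, by simp, card_le_two, errB_one_avB.symm⟩
  · rintro v ⟨α, h, hcard, rfl⟩
    obtain ⟨b, c, rfl⟩ := exists_eq_pair_of_card_le_two h hcard
    exact le_errB_pair b c h
end

section
/- Let P be the probability measure on ℝ supported on {1,…,6} with f(j) = (3/10)^{j−1}·(7/10) for j = 1,…,5 and f(6) = (3/10)^5. Then the fifth quantization error equals 1701/1000000, attained at {1, 2, 3, 4, a} where a = E(X | X ∈ {5,6}). -/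
lemma massB_pos (j : ℕ) : 0 < massB j := by
  unfold massB; split <;> positivity

/-- The minimum over `a` of the right-hand side is attained at the weighted mean of `x` and `y`. -/
lemma mul_mul_sq_sub_div_add_le_mul_sq_sub_add_mul_sq_sub {c d : ℝ} (hc : 0 < c) (hd : 0 < d)
    (x y a : ℝ) : c * d * (x - y) ^ 2 / (c + d) ≤ c * (x - a) ^ 2 + d * (y - a) ^ 2 := by
  rw [div_le_iff₀ (by positivity)]
  nlinarith [sq_nonneg (c * (x - a) + d * (y - a))]

lemma exists_ne_pair_bound_le_sum_mul_inf'_sq {ι : Type*} {S : Finset ι} {w x : ι → ℝ}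
    (hw : ∀ i ∈ S, 0 < w i) {α : Finset ℝ} (hα : α.Nonempty) (hcard : α.card < S.card) :
    ∃ i ∈ S, ∃ j ∈ S, i ≠ j ∧
      w i * w j * (x i - x j) ^ 2 / (w i + w j) ≤
        ∑ k ∈ S, w k * α.inf' hα (fun a => (x k - a) ^ 2) := by
  classical
  choose g hg hval using fun k => Finset.exists_mem_eq_inf' hα (fun a => (x k - a) ^ 2)
  obtain ⟨i, hi, j, hj, hne, hgij⟩ :=
    Finset.exists_ne_map_eq_of_card_lt_of_maps_to hcard fun k _ => hg k
  refine ⟨i, hi, j, hj, hne, ?_⟩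
  calc w i * w j * (x i - x j) ^ 2 / (w i + w j)
      ≤ w i * (x i - g i) ^ 2 + w j * (x j - g i) ^ 2 :=
        mul_mul_sq_sub_div_add_le_mul_sq_sub_add_mul_sq_sub (hw i hi) (hw j hj) _ _ _
    _ = ∑ k ∈ {i, j}, w k * α.inf' hα (fun a => (x k - a) ^ 2) := by
        rw [Finset.sum_pair hne, hval i, hval j, hgij]
    _ ≤ ∑ k ∈ S, w k * α.inf' hα (fun a => (x k - a) ^ 2) := by
        refine Finset.sum_le_sum_of_subset_of_nonneg
          (Finset.insert_subset_iff.mpr ⟨hi, Finset.singleton_subset_iff.mpr hj⟩) ?_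
        exact fun k hk _ =>
          mul_nonneg (hw k hk).le (Finset.le_inf' hα _ fun a _ => sq_nonneg (x k - a))

lemma le_massB_pair_bound {j j' : ℕ} (hj : j ∈ Finset.Icc 1 6) (hj' : j' ∈ Finset.Icc 1 6)
    (hne : j ≠ j') :
    (1701/1000000 : ℝ) ≤ massB j * massB j' * ((j : ℝ) - j') ^ 2 / (massB j + massB j') := by
  obtain ⟨h1, h6⟩ := Finset.mem_Icc.mp hj
  obtain ⟨h1', h6'⟩ := Finset.mem_Icc.mp hj'
  interval_cases j <;> interval_cases j' <;> simp_all [massB] <;> norm_num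

lemma le_errB {α : Finset ℝ} (hα : α.Nonempty) (hcard : α.card ≤ 5) :
    (1701/1000000 : ℝ) ≤ errB α hα := by
  obtain ⟨j, hj, j', hj', hne, hbound⟩ :=
    exists_ne_pair_bound_le_sum_mul_inf'_sq (S := Finset.Icc 1 6) (x := fun j : ℕ => (j : ℝ))
      (fun j _ => massB_pos j) hα (by simpa using hcard.trans_lt (by norm_num : 5 < 6))
  exact (le_massB_pair_bound hj hj' hne).trans hbound

lemma avB_five_six : avB 5 6 = 53/10 := by
  rw [avB, show Finset.Icc 5 6 = {5, 6} by decide]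
  norm_num [massB]

lemma errB_optimal : errB {1, 2, 3, 4, avB 5 6} (by simp) = 1701/1000000 := by
  simp only [avB_five_six]
  rw [errB, show Finset.Icc 1 6 = {1, 2, 3, 4, 5, 6} by decide]
  norm_num [Finset.sum_insert, Finset.inf'_insert, massB, min_def]

theorem stmt6 :
    sInf {v : ℝ | ∃ (α : Finset ℝ) (h : α.Nonempty), α.card ≤ 5 ∧ v = errB α h}
      = 1701/1000000 ∧
    errB {1, 2, 3, 4, avB 5 6} (by simp) = 1701/1000000 := by
  refine ⟨IsLeast.csInf_eq ⟨?_, ?_⟩, errB_optimal⟩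
  · exact ⟨_, _, Finset.card_le_five, errB_optimal.symm⟩
  · rintro v ⟨α, hα, hcard, rfl⟩
    exact le_errB hα hcard
end

section
/- Let P be the probability measure on ℝ supported on {1/n : n ∈ ℕ, n ≥ 1} with P({1/k}) = 1/2^k. Then the mean of P is log 2, and the first quantization error (the variance) equals (π² − 18 log²2)/12. -/
/-!
The mean is the Mercator series `∑ xⁿ/n = -log (1 - x)` at `x = 1/2`, and the variance is the
second moment minus the squared mean, the second moment being `Li₂(1/2)`. That value comes from
Euler's reflection formula `Li₂ x + Li₂ (1 - x) = π²/6 - log x log (1 - x)`: the left side plus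
`log x log (1 - x)` has derivative zero on `(0, 1)` and tends to `Li₂ 1 = ζ(2)` at `1`.
-/

open Real Filter Set Topology

noncomputable def dilog (x : ℝ) : ℝ := ∑' n : ℕ, x ^ (n + 1) / ((n + 1 : ℝ) ^ 2)

lemma summable_one_div_succ_sq : Summable (fun n : ℕ => 1 / ((n + 1 : ℝ) ^ 2)) := by
  simpa using (summable_nat_add_iff 1).2 (summable_one_div_nat_pow.2 one_lt_two)

lemma norm_pow_succ_div_sq_le {x : ℝ} (hx : |x| ≤ 1) (n : ℕ) :
    ‖x ^ (n + 1) / ((n + 1 : ℝ) ^ 2)‖ ≤ 1 / ((n + 1 : ℝ) ^ 2) := by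
  rw [norm_div, norm_pow, Real.norm_eq_abs, norm_of_nonneg (by positivity)]
  gcongr
  exact pow_le_one₀ (abs_nonneg x) hx

lemma summable_dilog {x : ℝ} (hx : |x| ≤ 1) :
    Summable (fun n : ℕ => x ^ (n + 1) / ((n + 1 : ℝ) ^ 2)) :=
  .of_norm_bounded summable_one_div_succ_sq (norm_pow_succ_div_sq_le hx)

lemma continuousOn_dilog : ContinuousOn dilog (Icc (-1) 1) :=
  continuousOn_tsum (fun n => by fun_prop) summable_one_div_succ_sq
    fun n x hx => norm_pow_succ_div_sq_le (abs_le.2 hx) n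

@[simp] lemma dilog_zero : dilog 0 = 0 := by
  simp [dilog]

lemma dilog_one : dilog 1 = π ^ 2 / 6 := by
  simpa [dilog] using ((hasSum_nat_add_iff' 1).2 hasSum_zeta_two).tsum_eq

lemma hasDerivAt_dilog_tsum {x : ℝ} (hx : |x| < 1) :
    HasDerivAt dilog (∑' n : ℕ, x ^ n / (n + 1 : ℝ)) x := by
  obtain ⟨r, hxr, hr1⟩ := exists_between hx
  have hr0 : 0 < r := (abs_nonneg x).trans_lt hxr
  refine hasDerivAt_tsum_of_isPreconnected
    (g := fun (n : ℕ) (y : ℝ) => y ^ (n + 1) / ((n + 1 : ℝ) ^ 2))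
    (g' := fun (n : ℕ) (y : ℝ) => y ^ n / (n + 1 : ℝ)) (y₀ := 0)
    (summable_geometric_of_lt_one hr0.le hr1) isOpen_Ioo
    isPreconnected_Ioo (fun n y _ => ?_) (fun n y hy => ?_)
    ⟨by linarith, by linarith⟩ (summable_dilog (by simp)) (abs_lt.1 hxr)
  · refine ((hasDerivAt_pow (n + 1) y).div_const ((n + 1 : ℝ) ^ 2)).congr_deriv ?_
    rw [Nat.add_sub_cancel]
    push_cast
    field_simp
  · have hn : (1 : ℝ) ≤ n + 1 := by linarith [n.cast_nonneg (α := ℝ)]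
    calc ‖y ^ n / (n + 1 : ℝ)‖ ≤ ‖y ^ n‖ := by
          rw [norm_div, norm_of_nonneg (by positivity : (0 : ℝ) ≤ n + 1)]
          exact div_le_self (norm_nonneg _) hn
      _ ≤ r ^ n := by
          rw [norm_pow]
          exact pow_le_pow_left₀ (norm_nonneg y) (abs_lt.2 hy).le n

lemma hasDerivAt_dilog {x : ℝ} (hx : |x| < 1) (hx0 : x ≠ 0) :
    HasDerivAt dilog (-log (1 - x) / x) x := by
  have hlog := (hasSum_pow_div_log_of_abs_lt_one hx).div_const x
  have hseries : HasSum (fun n : ℕ => x ^ n / (n + 1 : ℝ)) (-log (1 - x) / x) :=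
    hlog.congr_fun fun n => by
      rw [pow_succ]
      field_simp
  exact hseries.tsum_eq ▸ hasDerivAt_dilog_tsum hx

lemma hasDerivAt_dilog_add_dilog_one_sub {x : ℝ} (h0 : 0 < x) (h1 : x < 1) :
    HasDerivAt (fun y => dilog y + dilog (1 - y) + log y * log (1 - y)) 0 x := by
  have hx : |x| < 1 := abs_lt.2 ⟨by linarith, h1⟩
  have hx' : |1 - x| < 1 := abs_lt.2 ⟨by linarith, by linarith⟩
  have hsub : HasDerivAt (fun y : ℝ => 1 - y) (-1) x := by
    simpa using (hasDerivAt_id x).const_sub 1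
  have hdilog := hasDerivAt_dilog hx h0.ne'
  have hdilog' := (hasDerivAt_dilog hx' (by linarith)).comp x hsub
  have hlog := hasDerivAt_log h0.ne'
  have hlog' := (hasDerivAt_log (x := 1 - x) (by linarith)).comp x hsub
  refine ((hdilog.add hdilog').add (hlog.mul hlog')).congr_deriv ?_
  have h1x : 1 - x ≠ 0 := by linarith
  simp only [Function.comp_apply, sub_sub_cancel]
  field_simp
  ring

lemma tendsto_log_mul_log_one_sub_nhdsLT_one :
    Tendsto (fun x => log x * log (1 - x)) (𝓝[<] 1) (𝓝 0) := by
  have hslope : Tendsto (fun x => log x / (x - 1)) (𝓝[<] 1) (𝓝 1) := by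
    have := hasDerivAt_iff_tendsto_slope.1 (by simpa using hasDerivAt_log one_ne_zero)
    refine (this.mono_left (nhdsWithin_mono _ fun y hy => ne_of_lt hy)).congr' ?_
    filter_upwards with y
    simp [slope_def_field]
  have hmul_log : Tendsto (fun x => (x - 1) * log (1 - x)) (𝓝[<] 1) (𝓝 0) := by
    have hcont : Continuous fun x : ℝ => (1 - x) * log (1 - x) := by fun_prop
    have := (hcont.tendsto' 1 0 (by simp)).neg.mono_left (nhdsWithin_le_nhds (s := Iio 1))
    rw [neg_zero] at this
    refine this.congr fun y => ?_
    ring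
  refine ((hslope.mul hmul_log).congr' ?_).trans (by rw [mul_zero])
  filter_upwards [self_mem_nhdsWithin] with y hy
  have : y - 1 ≠ 0 := sub_ne_zero.2 (ne_of_lt hy)
  field_simp

lemma tendsto_dilog_add_dilog_one_sub_nhdsLT_one :
    Tendsto (fun y => dilog y + dilog (1 - y) + log y * log (1 - y)) (𝓝[<] 1)
      (𝓝 (π ^ 2 / 6)) := by
  have hdilog_one : Tendsto dilog (𝓝[<] 1) (𝓝 (π ^ 2 / 6)) := by
    rw [← dilog_one]
    exact (continuousOn_dilog 1 (by norm_num)).tendsto.mono_left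
      (nhdsWithin_le_of_mem (Icc_mem_nhdsLT (by norm_num)))
  have hdilog_zero : Tendsto (fun y => dilog (1 - y)) (𝓝[<] 1) (𝓝 0) := by
    have hcont : ContinuousAt dilog (1 - 1) :=
      continuousOn_dilog.continuousAt (Icc_mem_nhds (by norm_num) (by norm_num))
    simpa [Function.comp_def] using
      (hcont.comp (continuous_const.sub continuous_id).continuousAt).tendsto.mono_left
        nhdsWithin_le_nhds
  simpa using (hdilog_one.add hdilog_zero).add tendsto_log_mul_log_one_sub_nhdsLT_one

lemma dilog_add_dilog_one_sub {x : ℝ} (h0 : 0 < x) (h1 : x < 1) :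
    dilog x + dilog (1 - x) = π ^ 2 / 6 - log x * log (1 - x) := by
  have hderiv := fun y (hy : y ∈ Ioo (0 : ℝ) 1) => hasDerivAt_dilog_add_dilog_one_sub hy.1 hy.2
  have hconst : ∀ y ∈ Ioo (0 : ℝ) 1, dilog y + dilog (1 - y) + log y * log (1 - y) =
      dilog x + dilog (1 - x) + log x * log (1 - x) := fun y hy =>
    isOpen_Ioo.is_const_of_deriv_eq_zero isPreconnected_Ioo
      (fun z hz => (hderiv z hz).differentiableAt.differentiableWithinAt)
      (fun z hz => (hderiv z hz).deriv) hy ⟨h0, h1⟩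
  have hlim := tendsto_dilog_add_dilog_one_sub_nhdsLT_one.congr'
    (eventually_of_mem (Ioo_mem_nhdsLT zero_lt_one) hconst)
  linarith [tendsto_nhds_unique hlim tendsto_const_nhds]

lemma dilog_half : dilog (1 / 2) = π ^ 2 / 12 - log 2 ^ 2 / 2 := by
  have h := dilog_add_dilog_one_sub (x := 1 / 2) (by norm_num) (by norm_num)
  rw [show (1 : ℝ) - 1 / 2 = 1 / 2 by norm_num, one_div, log_inv] at h
  linarith

lemma HasSum.mul_sub_sq {ι : Type*} {p x : ι → ℝ} {m s : ℝ} (hp : HasSum p 1)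
    (hm : HasSum (fun i => p i * x i) m) (hs : HasSum (fun i => p i * x i ^ 2) s) :
    HasSum (fun i => p i * (x i - m) ^ 2) (s - m ^ 2) := by
  have h := (hs.sub (hm.mul_left (2 * m))).add (hp.mul_left (m ^ 2))
  rw [show s - 2 * m * m + m ^ 2 * 1 = s - m ^ 2 by ring] at h
  exact h.congr_fun fun i => by ring

theorem stmt8 :
    (∑' k : ℕ, (1/2^(k+1) : ℝ) * (1/(k+1 : ℝ))) = Real.log 2 ∧
    (∑' k : ℕ, (1/2^(k+1) : ℝ) * (1/(k+1 : ℝ) - Real.log 2)^2)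
      = (Real.pi^2 - 18 * (Real.log 2)^2) / 12 := by
  simp only [← one_div_pow]
  have hweights : HasSum (fun k : ℕ => (1 / 2 : ℝ) ^ (k + 1)) 1 := by
    simpa [pow_succ', div_eq_mul_inv] using hasSum_geometric_two' (1 : ℝ)
  have hmean : HasSum (fun k : ℕ => (1 / 2 : ℝ) ^ (k + 1) * (1 / (k + 1 : ℝ))) (log 2) := by
    have := hasSum_pow_div_log_of_abs_lt_one (x := 1 / 2) (by norm_num [abs_of_pos])
    rw [show (1 : ℝ) - 1 / 2 = (2 : ℝ)⁻¹ by norm_num, log_inv, neg_neg] at this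
    exact this.congr_fun fun k => mul_one_div _ _
  have hsecond :
      HasSum (fun k : ℕ => (1 / 2 : ℝ) ^ (k + 1) * (1 / (k + 1 : ℝ)) ^ 2) (dilog (1 / 2)) :=
    (summable_dilog (by norm_num [abs_of_pos])).hasSum.congr_fun fun k => by field_simp
  refine ⟨hmean.tsum_eq, ?_⟩
  rw [(hweights.mul_sub_sq hmean hsecond).tsum_eq, dilog_half]
  ring
end

section
/- For the uniform probability measure P on {1,2,3,4,5,6} (each point with mass 1/6), the quantization errors are V_1 = 35/12, and optimal sets of n-means for n = 1,…,6 are given by {7/2}, {2, 5}, {3/2, 7/2, 11/2}, {3/2, 7/2, 5, 6}, {3/2, 3, 4, 5, 6}, {1,2,3,4,5,6} respectively; moreover for n = 5 the optimal set is not unique: {1, 5/2, 4, 5, 6} attains the same error. -/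
/-- Distortion error of a nonempty finite set α for the uniform measure on {1,…,6}. -/
noncomputable def errU (α : Finset ℝ) (h : α.Nonempty) : ℝ :=
  ∑ j ∈ Finset.Icc (1:ℕ) 6, (1/6 : ℝ) * α.inf' h (fun a => ((j : ℝ) - a)^2)

/-- The n-th quantization error for the uniform measure on {1,…,6}. -/
noncomputable def quantU (n : ℕ) : ℝ :=
  sInf {v : ℝ | ∃ (α : Finset ℝ) (h : α.Nonempty), α.card ≤ n ∧ v = errU α h}

/-
A set α of at most n points splits {1, …, 6} into at most n cells by nearest point. A cell of m
distinct integers has sum of squared deviations at least (m³ − m)/12, the value for m consecutive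
integers. At integer arguments m ↦ m³ − m lies above its chord through any two consecutive integers
k, k + 1; summing that chord over the cells, whose sizes add up to 6, gives
V_n ≥ (6(3k² + 3k) − n(2k³ + 3k² + k))/72 for every k, and the listed sets attain this bound.
-/

open Finset

theorem sum_sub_sq_eq {ι R : Type*} [CommRing R] (S : Finset ι) (f : ι → R) (a : R) :
    ∑ i ∈ S, (f i - a) ^ 2 = ∑ i ∈ S, f i ^ 2 - 2 * a * ∑ i ∈ S, f i + #S * a ^ 2 := by
  simp only [sub_sq, sum_add_distrib, sum_sub_distrib, sum_const, nsmul_eq_mul, ← sum_mul,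
    ← mul_sum]
  ring

theorem card_mul_card_add_one_mul_le_sum_sq_sub (S : Finset ℤ) (x : ℤ) (hx : ∀ s ∈ S, s < x) :
    (#S : ℤ) * (#S + 1) * (2 * #S + 1) ≤ 6 * ∑ s ∈ S, (s - x) ^ 2 := by
  induction S using Finset.induction_on_min with
  | empty => simp
  | insert a S ha ih =>
    have hS : ∀ s ∈ S, s < x := fun s hs => hx s (mem_insert_of_mem hs)
    have haS : a ∉ S := fun h => (ha a h).false
    have hgap : (#S : ℤ) + 1 ≤ x - a := by
      have hsub : insert a S ⊆ Ico a x := fun s hs => by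
        rcases mem_insert.mp hs with rfl | hs
        · exact mem_Ico.mpr ⟨le_rfl, hx s (mem_insert_self _ _)⟩
        · exact mem_Ico.mpr ⟨(ha s hs).le, hS s hs⟩
      have := card_le_card hsub
      rw [card_insert_of_notMem haS, Int.card_Ico] at this
      omega
    rw [card_insert_of_notMem haS, sum_insert haS]
    push_cast
    nlinarith [ih hS]

/-- Adding a new maximum `a` increases `#S * ∑ s ^ 2 - (∑ s) ^ 2` by `∑ (s - a)²`. -/
theorem sq_card_mul_sq_card_sub_one_le (S : Finset ℤ) :
    (#S : ℤ) ^ 2 * (#S ^ 2 - 1) ≤ 12 * (#S * ∑ s ∈ S, s ^ 2 - (∑ s ∈ S, s) ^ 2) := by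
  induction S using Finset.induction_on_max with
  | empty => simp
  | insert a S ha ih =>
    have haS : a ∉ S := fun h => (ha a h).false
    have hnew := card_mul_card_add_one_mul_le_sum_sq_sub S a ha
    rw [sum_sub_sq_eq S (fun s => s) a] at hnew
    rw [card_insert_of_notMem haS, sum_insert haS, sum_insert haS]
    push_cast
    nlinarith [ih]

theorem card_cube_sub_card_le_sum_sq_sub (S : Finset ℤ) (a : ℝ) :
    ((#S : ℝ) ^ 3 - #S) / 12 ≤ ∑ s ∈ S, ((s : ℝ) - a) ^ 2 := by
  rcases S.eq_empty_or_nonempty with rfl | hne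
  · simp
  have hm : (0 : ℝ) < #S := by exact_mod_cast hne.card_pos
  have hspread := (Int.cast_le (R := ℝ)).mpr (sq_card_mul_sq_card_sub_one_le S)
  push_cast at hspread
  rw [sum_sub_sq_eq]
  nlinarith [sq_nonneg ((#S : ℝ) * a - ∑ s ∈ S, (s : ℝ))]

theorem card_cube_sub_card_le_sum_sq_sub_of_nat (S : Finset ℕ) (a : ℝ) :
    ((#S : ℝ) ^ 3 - #S) / 12 ≤ ∑ s ∈ S, ((s : ℝ) - a) ^ 2 := by
  simpa using card_cube_sub_card_le_sum_sq_sub (S.map Nat.castEmbedding) a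

theorem sum_card_fiber_cube_le_sum_sq_sub (J : Finset ℕ) (f : ℕ → ℝ) :
    ∑ t ∈ J.image f, ((#{j ∈ J | f j = t} : ℝ) ^ 3 - #{j ∈ J | f j = t}) / 12
      ≤ ∑ j ∈ J, ((j : ℝ) - f j) ^ 2 := by
  rw [← sum_fiberwise_of_maps_to fun j hj => mem_image_of_mem f hj]
  refine sum_le_sum fun t _ => ?_
  calc _ ≤ ∑ j ∈ J with f j = t, ((j : ℝ) - t) ^ 2 :=
        card_cube_sub_card_le_sum_sq_sub_of_nat _ t
    _ = _ := sum_congr rfl fun j hj => by rw [(mem_filter.mp hj).2]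

/-- The difference of the two sides is `(m - k) * (m - k - 1) * (m + 2 * k + 1)`. -/
theorem chord_le_cube_sub_self (k m : ℕ) :
    (3 * k ^ 2 + 3 * k : ℝ) * m - (2 * k ^ 3 + 3 * k ^ 2 + k) ≤ (m : ℝ) ^ 3 - m := by
  have hkm : 0 ≤ ((m : ℝ) - k) * ((m : ℝ) - k - 1) := by
    rcases le_or_gt m k with h | h
    · have h' : (m : ℝ) ≤ k := by exact_mod_cast h
      nlinarith
    · have h' : (k : ℝ) + 1 ≤ m := by exact_mod_cast h
      nlinarith
  nlinarith [mul_nonneg hkm (by positivity : (0 : ℝ) ≤ m + 2 * k + 1)]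

theorem le_sum_sq_sub_of_card_image_le (J : Finset ℕ) (f : ℕ → ℝ) (n k : ℕ)
    (hn : #(J.image f) ≤ n) :
    (#J * (3 * k ^ 2 + 3 * k) - n * (2 * k ^ 3 + 3 * k ^ 2 + k)) / 12
      ≤ ∑ j ∈ J, ((j : ℝ) - f j) ^ 2 := by
  set c : ℝ → ℕ := fun t => #{j ∈ J | f j = t}
  have hcard : (#J : ℝ) = ∑ t ∈ J.image f, (c t : ℝ) := by
    exact_mod_cast card_eq_sum_card_image f J
  have hn' : (#(J.image f) : ℝ) ≤ n := by exact_mod_cast hn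
  calc _ ≤ ∑ t ∈ J.image f,
          ((3 * k ^ 2 + 3 * k : ℝ) * c t - (2 * k ^ 3 + 3 * k ^ 2 + k)) / 12 := by
        rw [← sum_div, sum_sub_distrib, ← mul_sum, sum_const, nsmul_eq_mul, ← hcard]
        rw [div_le_div_iff_of_pos_right (by norm_num)]
        nlinarith [(by positivity : (0 : ℝ) ≤ 2 * k ^ 3 + 3 * k ^ 2 + k)]
    _ ≤ ∑ t ∈ J.image f, ((c t : ℝ) ^ 3 - c t) / 12 :=
        sum_le_sum fun t _ =>
          (div_le_div_iff_of_pos_right (by norm_num)).mpr (chord_le_cube_sub_self k (c t))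
    _ ≤ _ := sum_card_fiber_cube_le_sum_sq_sub J f

theorem le_errU (n k : ℕ) (α : Finset ℝ) (h : α.Nonempty) (hα : #α ≤ n) :
    (6 * (3 * k ^ 2 + 3 * k) - n * (2 * k ^ 3 + 3 * k ^ 2 + k)) / 72 ≤ errU α h := by
  choose f hfα hf using fun j : ℕ => α.exists_mem_eq_inf' h fun a => ((j : ℝ) - a) ^ 2
  have himage : #((Icc 1 6).image f) ≤ n :=
    (card_le_card fun t ht => by obtain ⟨j, -, rfl⟩ := mem_image.mp ht; exact hfα j).trans hα
  have := le_sum_sq_sub_of_card_image_le (Icc 1 6) f n k himage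
  simp only [Nat.card_Icc, errU, hf, ← mul_sum] at this ⊢
  push_cast at this
  linarith

theorem quantU_eq_errU (n k : ℕ) (α : Finset ℝ) (h : α.Nonempty) (hα : #α ≤ n)
    (hk : errU α h = (6 * (3 * k ^ 2 + 3 * k) - n * (2 * k ^ 3 + 3 * k ^ 2 + k)) / 72) :
    quantU n = errU α h :=
  IsLeast.csInf_eq ⟨⟨α, h, hα, rfl⟩, by rintro _ ⟨β, hβ, hβn, rfl⟩; exact hk ▸ le_errU n k β hβ hβn⟩

theorem errU_eq_sum (α : Finset ℝ) (h : α.Nonempty) :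
    errU α h =
      1 / 6 * ∑ j ∈ ({1, 2, 3, 4, 5, 6} : Finset ℕ), α.inf' h fun a => ((j : ℝ) - a) ^ 2 := by
  rw [errU, ← mul_sum]
  rfl

theorem stmt19 :
    quantU 1 = 35/12 ∧
    errU {7/2} (by simp) = quantU 1 ∧
    errU {2, 5} (by simp) = quantU 2 ∧
    errU {3/2, 7/2, 11/2} (by simp) = quantU 3 ∧
    errU {3/2, 7/2, 5, 6} (by simp) = quantU 4 ∧
    errU {3/2, 3, 4, 5, 6} (by simp) = quantU 5 ∧
    errU {1, 2, 3, 4, 5, 6} (by simp) = quantU 6 ∧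
    errU {1, 5/2, 4, 5, 6} (by simp) = quantU 5 ∧
    ({1, 5/2, 4, 5, 6} : Finset ℝ) ≠ {3/2, 3, 4, 5, 6} := by
  have e1 : errU {7/2} (by simp) = 35/12 := by norm_num [errU_eq_sum]
  have q1 := quantU_eq_errU 1 5 {7/2} (by simp) (by simp) (by rw [e1]; norm_num)
  have q2 := quantU_eq_errU 2 2 {2, 5} (by simp) (by norm_num [card_insert_le])
    (by norm_num [errU_eq_sum, inf'_insert, min_def])
  have q3 := quantU_eq_errU 3 1 {3/2, 7/2, 11/2} (by simp) (by norm_num [card_insert_le])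
    (by norm_num [errU_eq_sum, inf'_insert, min_def])
  have q4 := quantU_eq_errU 4 1 {3/2, 7/2, 5, 6} (by simp) (by norm_num [card_insert_le])
    (by norm_num [errU_eq_sum, inf'_insert, min_def])
  have q5 := quantU_eq_errU 5 1 {3/2, 3, 4, 5, 6} (by simp) (by norm_num [card_insert_le])
    (by norm_num [errU_eq_sum, inf'_insert, min_def])
  have q6 := quantU_eq_errU 6 1 {1, 2, 3, 4, 5, 6} (by simp) (by norm_num [card_insert_le])
    (by norm_num [errU_eq_sum, inf'_insert, min_def])
  have e5 : errU {1, 5/2, 4, 5, 6} (by simp) = errU {3/2, 3, 4, 5, 6} (by simp) := by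
    norm_num [errU_eq_sum, inf'_insert, min_def]
  refine ⟨q1.trans e1, q1.symm, q2.symm, q3.symm, q4.symm, q5.symm, q6.symm, e5.trans q5.symm,
    fun h => ?_⟩
  have h1 := congrArg ((1 : ℝ) ∈ ·) h
  norm_num at h1
end
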